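/- arXiv:1103.5328 — 4 statements merged into one kernel-verified Lean document; each statement's English description precedes it below -/
import Mathlib

section
/- Let Y be a CAT(0) space and C₁, C₂ closed convex subsets. Suppose α is a geodesic from y₁ ∈ C₁ to y₂ ∈ C₂ such that the Alexandrov angle at y₁ between α and any geodesic into C₁ is ≥ π/2, and similarly at y₂ for C₂. Then the length of α equals the distance d(C₁, C₂), provided a geodesic realizing d(C₁,C₂) exists. -/
/-- `f` restricted to `[0, L]` is a unit-speed geodesic. -/
def IsGeodesic {X : Type*} [MetricSpace X] (f : ℝ → X) (L : ℝ) : Prop :=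
  ∀ s ∈ Set.Icc (0:ℝ) L, ∀ t ∈ Set.Icc (0:ℝ) L, dist (f s) (f t) = |s - t|

/-- `X` is a geodesic space satisfying the CN (Bruhat–Tits) inequality, i.e. CAT(0). -/
def IsCAT0 (X : Type*) [MetricSpace X] : Prop :=
  (∀ x y : X, ∃ f : ℝ → X, IsGeodesic f (dist x y) ∧ f 0 = x ∧ f (dist x y) = y) ∧
  ∀ x y z m : X, dist y m = dist y z / 2 → dist z m = dist y z / 2 →
    dist x m ^ 2 ≤ (dist x y ^ 2 + dist x z ^ 2) / 2 - dist y z ^ 2 / 4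

/-- In a CAT(0) space, a geodesic `α` from `y₁ ∈ C₁` to `y₂ ∈ C₂`
(`C₁`, `C₂` closed convex) making Alexandrov angle `≥ π/2` with every geodesic into
`C₁` at `y₁` and into `C₂` at `y₂` (encoded via the comparison inequality
`dist(α s, σ t)² ≥ s² + t²`) realizes the distance `d(C₁, C₂)`, provided that
distance is realized by some pair of points. -/
theorem spanning_geodesic_of_right_angles {X : Type*} [MetricSpace X] (hX : IsCAT0 X)
    (C₁ C₂ : Set X) (h₁c : IsClosed C₁) (h₂c : IsClosed C₂)
    (h₁conv : ∀ x ∈ C₁, ∀ y ∈ C₁, ∃ f : ℝ → X, IsGeodesic f (dist x y) ∧ f 0 = x ∧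
      f (dist x y) = y ∧ ∀ s ∈ Set.Icc (0:ℝ) (dist x y), f s ∈ C₁)
    (h₂conv : ∀ x ∈ C₂, ∀ y ∈ C₂, ∃ f : ℝ → X, IsGeodesic f (dist x y) ∧ f 0 = x ∧
      f (dist x y) = y ∧ ∀ s ∈ Set.Icc (0:ℝ) (dist x y), f s ∈ C₂)
    (y₁ y₂ : X) (hy₁ : y₁ ∈ C₁) (hy₂ : y₂ ∈ C₂)
    (α : ℝ → X) (hα : IsGeodesic α (dist y₁ y₂))
    (hα0 : α 0 = y₁) (hα1 : α (dist y₁ y₂) = y₂)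
    -- angle at y₁ between α and any geodesic into C₁ is ≥ π/2
    (hang₁ : ∀ (σ : ℝ → X) (L : ℝ), 0 ≤ L → IsGeodesic σ L → σ 0 = y₁ →
      (∀ t ∈ Set.Icc (0:ℝ) L, σ t ∈ C₁) →
      ∀ s ∈ Set.Icc (0:ℝ) (dist y₁ y₂), ∀ t ∈ Set.Icc (0:ℝ) L,
        s ^ 2 + t ^ 2 ≤ dist (α s) (σ t) ^ 2)
    -- angle at y₂ between (reversed) α and any geodesic into C₂ is ≥ π/2
    (hang₂ : ∀ (σ : ℝ → X) (L : ℝ), 0 ≤ L → IsGeodesic σ L → σ 0 = y₂ →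
      (∀ t ∈ Set.Icc (0:ℝ) L, σ t ∈ C₂) →
      ∀ s ∈ Set.Icc (0:ℝ) (dist y₁ y₂), ∀ t ∈ Set.Icc (0:ℝ) L,
        s ^ 2 + t ^ 2 ≤ dist (α (dist y₁ y₂ - s)) (σ t) ^ 2)
    -- the distance between C₁ and C₂ is realized
    (hreal : ∃ p ∈ C₁, ∃ q ∈ C₂,
      dist p q = sInf {r : ℝ | ∃ p' ∈ C₁, ∃ q' ∈ C₂, r = dist p' q'}) :
    dist y₁ y₂ = sInf {r : ℝ | ∃ p' ∈ C₁, ∃ q' ∈ C₂, r = dist p' q'} := by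
  obtain ⟨p, hp, q, hq, hpq⟩ := hreal
  have hd0 : (0:ℝ) ≤ dist y₁ y₂ := dist_nonneg
  -- midpoints exist
  have midpt : ∀ x y : X, ∃ m : X, dist x m = dist x y / 2 ∧ dist y m = dist x y / 2 := by
    intro x y
    obtain ⟨f, hf, hf0, hf1⟩ := hX.1 x y
    have h0 : (0:ℝ) ≤ dist x y := dist_nonneg
    refine ⟨f (dist x y / 2), ?_, ?_⟩
    · have := hf 0 ⟨le_refl _, h0⟩ (dist x y / 2) ⟨by linarith, by linarith⟩
      rw [hf0] at this
      rw [this, abs_of_nonpos (by linarith)]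
      ring
    · have := hf (dist x y) ⟨h0, le_refl _⟩ (dist x y / 2) ⟨by linarith, by linarith⟩
      rw [hf1] at this
      rw [this, abs_of_nonneg (by linarith)]
      ring
  -- right angle at y₁ : dist y₂ p ^ 2 ≥ d² + dist y₁ p ^2
  obtain ⟨f, hfg, hf0, hf1, hfC⟩ := h₁conv y₁ hy₁ p hp
  have hP : dist y₁ y₂ ^ 2 + dist y₁ p ^ 2 ≤ dist y₂ p ^ 2 := by
    have := hang₁ f (dist y₁ p) dist_nonneg hfg hf0 hfC (dist y₁ y₂)
      ⟨hd0, le_refl _⟩ (dist y₁ p) ⟨dist_nonneg, le_refl _⟩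
    rwa [hα1, hf1] at this
  obtain ⟨g, hgg, hg0, hg1, hgC⟩ := h₂conv y₂ hy₂ q hq
  have hC : dist y₁ y₂ ^ 2 + dist y₂ q ^ 2 ≤ dist y₁ q ^ 2 := by
    have := hang₂ g (dist y₂ q) dist_nonneg hgg hg0 hgC (dist y₁ y₂)
      ⟨hd0, le_refl _⟩ (dist y₂ q) ⟨dist_nonneg, le_refl _⟩
    rwa [sub_self, hα0, hg1] at this
  obtain ⟨n, hn1, hn2⟩ := midpt y₂ p
  obtain ⟨m, hm1, hm2⟩ := midpt y₁ q
  have CN1 := hX.2 y₁ y₂ p n hn1 hn2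
  have CN2 := hX.2 q y₂ p n hn1 hn2
  have CN3 := hX.2 n y₁ q m hm1 hm2
  have hsq : dist y₁ y₂ ^ 2 ≤ dist p q ^ 2 := by
    rw [dist_comm q y₂, dist_comm q p] at CN2
    rw [dist_comm n y₁, dist_comm n q] at CN3
    nlinarith [sq_nonneg (dist n m), CN1, CN2, CN3, hP, hC]
  have hle : dist y₁ y₂ ≤ dist p q := by
    nlinarith [dist_nonneg (x := p) (y := q), hd0]
  apply le_antisymm
  · rw [← hpq]; exact hle
  · exact csInf_le ⟨0, by rintro r ⟨p', _, q', _, rfl⟩; exact dist_nonneg⟩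
      ⟨y₁, hy₁, y₂, hy₂, rfl⟩
end

section
/- Let Λ ≤ ℝ² be a lattice (discrete cocompact subgroup) and L a line in ℝ² through the origin. For every ε > 0 and every R > 0, there exists a nonzero lattice point p ∈ Λ with dist(p, L) < ε and |p| > R. -/
set_option maxHeartbeats 1000000 in
/-- For a lattice `L` in `ℝ²` (a discrete cocompact, i.e. ℤ-lattice,
subgroup) and a line through the origin with direction `v ≠ 0`, for every `ε > 0` and
`R > 0` there is a nonzero lattice point `p` with `dist(p, line) < ε` and `‖p‖ > R`. -/
theorem lattice_points_near_line (L : Submodule ℤ (EuclideanSpace ℝ (Fin 2)))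
    [DiscreteTopology L] [IsZLattice ℝ L]
    (v : EuclideanSpace ℝ (Fin 2)) (hv : v ≠ 0)
    (ε R : ℝ) (hε : 0 < ε) (hR : 0 < R) :
    ∃ p ∈ L, p ≠ 0 ∧
      Metric.infDist p (Set.range fun t : ℝ => t • v) < ε ∧ R < ‖p‖ := by
  classical
  let b := Module.Free.chooseBasis ℤ L
  let B := b.ofZLatticeBasis ℝ
  set C : ℝ := ∑ i, ‖B i‖ with hC
  have hv' : (0:ℝ) < ‖v‖ := norm_pos_iff.mpr hv
  set M : ℝ := (R + ε + 1) / ‖v‖ with hM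
  have hM0 : 0 < M := by positivity
  -- round each point (M*n)•v to the lattice
  let p : ℕ → EuclideanSpace ℝ (Fin 2) := fun n => (ZSpan.floor B ((M * n) • v) : EuclideanSpace ℝ (Fin 2))
  have hpL : ∀ n, p n ∈ L := fun n => by
    rw [← b.ofZLatticeBasis_span ℝ]
    exact SetLike.coe_mem (ZSpan.floor B ((M * n) • v))
  let g : ℕ → EuclideanSpace ℝ (Fin 2) := fun n => (M * n) • v - p n
  have hg : ∀ n, g n ∈ Metric.closedBall (0:EuclideanSpace ℝ (Fin 2)) C := fun n => by
    rw [Metric.mem_closedBall, dist_zero_right]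
    exact ZSpan.norm_fract_le B _
  obtain ⟨x, -, φ, hφ, hx⟩ := (isCompact_closedBall (0:EuclideanSpace ℝ (Fin 2)) C).tendsto_subseq hg
  rw [Metric.tendsto_atTop] at hx
  obtain ⟨N, hN⟩ := hx (ε/2) (by positivity)
  set n₁ := φ N with hn₁
  set n₂ := φ (N+1) with hn₂
  have hlt : n₁ < n₂ := hφ (Nat.lt_succ_self N)
  have hdist : ‖g n₂ - g n₁‖ < ε := by
    have h1 := hN N le_rfl
    have h2 := hN (N+1) (Nat.le_succ N)
    calc ‖g n₂ - g n₁‖ ≤ ‖g n₂ - x‖ + ‖x - g n₁‖ := norm_sub_le_norm_sub_add_norm_sub _ _ _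
      _ < ε/2 + ε/2 := by
          rw [← dist_eq_norm, ← dist_eq_norm, dist_comm x]
          exact add_lt_add h2 h1
      _ = ε := add_halves ε
  set t : ℝ := M * n₂ - M * n₁ with ht
  set q : EuclideanSpace ℝ (Fin 2) := p n₂ - p n₁ with hq
  have hgq : g n₂ - g n₁ = t • v - q := by
    simp only [g, ht, hq, sub_smul]
    abel
  have hqt : ‖t • v - q‖ < ε := by rwa [← hgq]
  have htM : M ≤ t := by
    have h1 : (n₁:ℝ) + 1 ≤ (n₂:ℝ) := by exact_mod_cast hlt
    have : t = M * ((n₂:ℝ) - (n₁:ℝ)) := by rw [ht]; ring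
    rw [this]
    nlinarith
  have htv : R + ε + 1 ≤ t * ‖v‖ := by
    have hMv : M * ‖v‖ = R + ε + 1 := div_mul_cancel₀ _ (ne_of_gt hv')
    nlinarith [htM, hv']
  have hnq : R + 1 < ‖q‖ := by
    have h1 : ‖t • v‖ - ‖q‖ ≤ ‖t • v - q‖ := norm_sub_norm_le _ _
    have h2 : ‖t • v‖ = |t| * ‖v‖ := by rw [norm_smul, Real.norm_eq_abs]
    have ht0 : 0 ≤ t := le_of_lt (lt_of_lt_of_le hM0 htM)
    rw [abs_of_nonneg ht0] at h2
    linarith [hqt, htv, h2 ▸ h1]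
  refine ⟨q, sub_mem (hpL n₂) (hpL n₁), ?_, ?_, by linarith⟩
  · intro h
    rw [h, norm_zero] at hnq
    linarith
  · calc Metric.infDist q (Set.range fun t : ℝ => t • v)
        ≤ dist q (t • v) := Metric.infDist_le_dist_of_mem ⟨t, rfl⟩
      _ = ‖t • v - q‖ := by rw [dist_eq_norm, norm_sub_rev]
      _ < ε := hqt
end

section
/- Let G ≅ ℤ² act freely, properly discontinuously, and by translations on the Euclidean plane 𝔼². Then for every line L through a point x₀ in the G-orbit and every ε > 0, R > 0, there is g ∈ G with g ≠ 1, d(x₀, g x₀) > R, and the angle at x₀ between the segment [x₀, g x₀] and L is less than ε. -/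
/-!
Discreteness forces `T (1, 0)` and `T (0, 1)` to be linearly independent over `ℝ` (a dependence
`T (0, 1) = r • T (1, 0)` would send all `(-⌊n r⌋, n)` into a bounded set), so they form a basis
of the plane and every point lies within a fixed distance `C` of the orbit. An orbit point within
`C` of `s • v` has norm at least `s ‖v‖ - C`, and its angle with `v` tends to `0` as `s → ∞`.
-/

open InnerProductGeometry Filter Topology Module

section Lattice

variable {E : Type*}

lemma AddMonoidHom.apply_eq_smul_add_smul [AddCommGroup E] [Module ℝ E] (T : ℤ × ℤ →+ E)
    (g : ℤ × ℤ) : T g = (g.1 : ℝ) • T (1, 0) + (g.2 : ℝ) • T (0, 1) := by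
  conv_lhs => rw [show g = g.1 • ((1 : ℤ), (0 : ℤ)) + g.2 • ((0 : ℤ), (1 : ℤ)) by ext <;> simp]
  simp only [map_add, map_zsmul, Int.cast_smul_eq_zsmul]

variable [NormedAddCommGroup E] [NormedSpace ℝ E]

lemma AddMonoidHom.setOf_norm_apply_le_zero_infinite_of_apply_eq_zero (T : ℤ × ℤ →+ E)
    (h : T (1, 0) = 0) : {g : ℤ × ℤ | ‖T g‖ ≤ 0}.Infinite := by
  refine Set.Infinite.mono ?_ (Set.infinite_range_of_injective
    (f := fun n : ℤ => ((n, 0) : ℤ × ℤ)) fun _ _ h => congrArg Prod.fst h)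
  rintro _ ⟨n, rfl⟩
  rw [Set.mem_ofPred_eq, T.apply_eq_smul_add_smul, h]
  simp

/-- The points `(-⌊n r⌋, n)` are sent to `Int.fract (n r) • T (1, 0)`. -/
lemma AddMonoidHom.setOf_norm_apply_le_infinite_of_eq_smul (T : ℤ × ℤ →+ E) (r : ℝ)
    (hr : T (0, 1) = r • T (1, 0)) : {g : ℤ × ℤ | ‖T g‖ ≤ ‖T (1, 0)‖}.Infinite := by
  refine Set.Infinite.mono ?_ (Set.infinite_range_of_injective
    (f := fun n : ℤ => ((-⌊(n : ℝ) * r⌋, n) : ℤ × ℤ)) fun _ _ h => congrArg Prod.snd h)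
  rintro _ ⟨n, rfl⟩
  have hfract : ((-⌊(n : ℝ) * r⌋ : ℤ) : ℝ) + n * r = Int.fract (n * r) := by
    push_cast [Int.fract]; ring
  rw [Set.mem_ofPred_eq, T.apply_eq_smul_add_smul, hr, smul_smul, ← add_smul, hfract, norm_smul,
    Real.norm_of_nonneg (Int.fract_nonneg _)]
  exact mul_le_of_le_one_left (norm_nonneg _) (Int.fract_lt_one _).le

lemma AddMonoidHom.linearIndependent_of_setOf_norm_apply_le_finite (T : ℤ × ℤ →+ E)
    (hfin : ∀ R : ℝ, {g : ℤ × ℤ | ‖T g‖ ≤ R}.Finite) :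
    LinearIndependent ℝ ![T (1, 0), T (0, 1)] := by
  have hT₁ : T (1, 0) ≠ 0 := fun h =>
    T.setOf_norm_apply_le_zero_infinite_of_apply_eq_zero h (hfin 0)
  rw [LinearIndependent.pair_iff' hT₁]
  exact fun r hr => T.setOf_norm_apply_le_infinite_of_eq_smul r hr.symm (hfin _)

lemma AddMonoidHom.exists_forall_exists_norm_sub_apply_le (h2 : finrank ℝ E = 2)
    (T : ℤ × ℤ →+ E) (hT : LinearIndependent ℝ ![T (1, 0), T (0, 1)]) :
    ∃ C, ∀ p : E, ∃ g, ‖p - T g‖ ≤ C := by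
  let B := basisOfLinearIndependentOfCardEqFinrank hT (by simp [h2])
  have hspan : Submodule.span ℤ (Set.range B) ≤ AddSubgroup.toIntSubmodule T.range := by
    rw [Submodule.span_le, coe_basisOfLinearIndependentOfCardEqFinrank]
    rintro _ ⟨i, rfl⟩
    fin_cases i
    exacts [⟨(1, 0), rfl⟩, ⟨(0, 1), rfl⟩]
  refine ⟨∑ i, ‖B i‖, fun p => ?_⟩
  obtain ⟨g, hg⟩ := hspan (ZSpan.floor B p).2
  exact ⟨g, by simpa only [hg, ← ZSpan.fract_apply] using ZSpan.norm_fract_le B p⟩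

end Lattice

lemma exists_lt_norm_angle_lt {F ι : Type*} [NormedAddCommGroup F] [InnerProductSpace ℝ F]
    {f : ι → F} {C : ℝ} (hf : ∀ p, ∃ i, ‖p - f i‖ ≤ C) {u : F} (hu : u ≠ 0) (R : ℝ)
    {ε : ℝ} (hε : 0 < ε) : ∃ i, R < ‖f i‖ ∧ angle (f i) u < ε := by
  choose i hw using fun s : ℝ => hf (s • u)
  set w := fun s => f (i s)
  have hpos : ∀ᶠ s : ℝ in atTop, 0 < s := eventually_gt_atTop 0
  have hscaled : Tendsto (fun s => s⁻¹ • w s) atTop (𝓝 u) := by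
    rw [tendsto_iff_norm_sub_tendsto_zero]
    refine squeeze_zero' (.of_forall fun _ => norm_nonneg _) ?_
      (by simpa using tendsto_inv_atTop_zero.const_mul C)
    filter_upwards [hpos] with s hs
    calc ‖s⁻¹ • w s - u‖ = ‖s⁻¹ • (w s - s • u)‖ := by rw [smul_sub, inv_smul_smul₀ hs.ne']
      _ = s⁻¹ * ‖s • u - w s‖ := by
          rw [norm_smul, Real.norm_of_nonneg (inv_nonneg.2 hs.le), norm_sub_rev]
      _ ≤ C * s⁻¹ := by
          rw [mul_comm]; exact mul_le_mul_of_nonneg_right (hw s) (inv_nonneg.2 hs.le)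
  have hangle : Tendsto (fun s => angle (w s) u) atTop (𝓝 0) := by
    have := ((continuousAt_angle (x := (u, u)) hu hu).tendsto.comp
      (hscaled.prodMk_nhds tendsto_const_nhds))
    rw [angle_self hu] at this
    refine this.congr' ?_
    filter_upwards [hpos] with s hs using angle_smul_left_of_pos _ _ (inv_pos.2 hs)
  have hnorm : Tendsto (fun s => ‖w s‖) atTop atTop := by
    refine tendsto_atTop_mono' _ ?_ (tendsto_atTop_add_const_right _ (-C)
      (tendsto_id.atTop_mul_const (norm_pos_iff.2 hu)))
    filter_upwards [hpos] with s hs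
    have := norm_sub_norm_le (s • u) (w s)
    rw [norm_smul, Real.norm_of_nonneg hs.le] at this
    simp only [id]; linarith [hw s]
  obtain ⟨s, hsR, hsε⟩ :=
    ((hnorm.eventually_gt_atTop R).and (hangle.eventually_lt_const hε)).exists
  exact ⟨i s, hsR, hsε⟩

theorem orbit_points_near_direction_general
    (T : (ℤ × ℤ) →+ EuclideanSpace ℝ (Fin 2))
    (hproper : ∀ R : ℝ, {g : ℤ × ℤ | ‖T g‖ ≤ R}.Finite)
    (x₀ v : EuclideanSpace ℝ (Fin 2)) (hv : v ≠ 0)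
    (ε R : ℝ) (hε : 0 < ε) (hR : 0 < R) :
    ∃ g : ℤ × ℤ, g ≠ 0 ∧ R < dist x₀ (x₀ + T g) ∧
      min (InnerProductGeometry.angle (T g) v)
        (InnerProductGeometry.angle (T g) (-v)) < ε := by
  obtain ⟨C, hC⟩ := T.exists_forall_exists_norm_sub_apply_le finrank_euclideanSpace_fin
    (T.linearIndependent_of_setOf_norm_apply_le_finite hproper)
  obtain ⟨g, hgR, hgε⟩ := exists_lt_norm_angle_lt hC hv R hε
  refine ⟨g, ?_, by rwa [dist_self_add_right], min_lt_of_left_lt hgε⟩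
  rintro rfl
  simp only [map_zero, norm_zero] at hgR
  exact hgR.not_gt hR

/-- Let `G ≅ ℤ²` act freely, properly discontinuously by translations on
the Euclidean plane (encoded by an injective homomorphism `T : ℤ × ℤ →+ ℝ²` with
finitely many elements of bounded translation norm; the action is `g • x = x + T g`).
Then for every line `L` through a point `x₀` with direction `v ≠ 0` and every
`ε > 0`, `R > 0`, there is `g ≠ 1` with `d(x₀, g x₀) > R` and the angle at `x₀`
between the segment `[x₀, g x₀]` and `L` less than `ε`. -/
theorem orbit_points_near_direction
    (T : (ℤ × ℤ) →+ EuclideanSpace ℝ (Fin 2))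
    (hfree : Function.Injective T)
    (hproper : ∀ R : ℝ, {g : ℤ × ℤ | ‖T g‖ ≤ R}.Finite)
    (x₀ v : EuclideanSpace ℝ (Fin 2)) (hv : v ≠ 0)
    (ε R : ℝ) (hε : 0 < ε) (hR : 0 < R) :
    ∃ g : ℤ × ℤ, g ≠ 0 ∧ R < dist x₀ (x₀ + T g) ∧
      min (InnerProductGeometry.angle (T g) v)
        (InnerProductGeometry.angle (T g) (-v)) < ε :=
  orbit_points_near_direction_general T hproper x₀ v hv ε R hε hR
end

section
/- Let X be a CAT(0) space and let g, h be hyperbolic isometries with minsets min(g), min(h). If min(g) ∩ min(h) is nonempty and unbounded, and the axes of g through points of the intersection agree as sets with axes of h, and the action of ⟨g,h⟩ is proper, then gⁿ = hᵐ for some nonzero integers n, m; in particular ⟨g⟩ ∩ ⟨h⟩ ≠ {1}. -/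
/-!
Both `g` and `h` translate the line `A`, so `g ^ n * h ^ (-m)` moves `A 0` by
`|n * lg - m * lh|`. Taking `m = ⌊n * lg / lh⌋` keeps this below `lh` for every `n : ℕ`, so by
properness infinitely many such elements lie in a finite set and two of them coincide, giving
`g ^ n = h ^ m` with `n ≠ 0`. Then `m ≠ 0` as well, since no nonzero power of `g` fixes `A 0`.
-/

section Translation

variable {G X : Type*} [Group G] [MulAction G X] {A : ℝ → X} {k : G} {l : ℝ}

theorem zpow_smul_eq_of_forall_smul_eq (hk : ∀ t, k • A t = A (t + l)) (n : ℤ) (t : ℝ) :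
    k ^ n • A t = A (t + n * l) := by
  induction n using Int.induction_on generalizing t with
  | zero => simp
  | succ n ih =>
    rw [zpow_add_one, mul_smul, hk, ih]
    push_cast
    ring_nf
  | pred n ih =>
    have hk_inv : k⁻¹ • A t = A (t - l) := by
      rw [inv_smul_eq_iff, hk, sub_add_cancel]
    rw [zpow_sub_one, mul_smul, hk_inv, ih]
    push_cast
    ring_nf

theorem zpow_ne_one_of_forall_smul_eq (hA : Function.Injective A)
    (hk : ∀ t, k • A t = A (t + l)) (hl : l ≠ 0) {n : ℤ} (hn : n ≠ 0) : k ^ n ≠ 1 := by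
  intro hkn
  have hfix : A (0 + n * l) = A 0 := by
    rw [← zpow_smul_eq_of_forall_smul_eq hk, hkn, one_smul]
  have : (n : ℝ) * l = 0 := by simpa using hA hfix
  exact mul_ne_zero (Int.cast_ne_zero.mpr hn) hl this

theorem dist_zpow_mul_zpow_smul [PseudoMetricSpace X] (hA : Isometry A) {g h : G} {lg lh : ℝ}
    (hg : ∀ t, g • A t = A (t + lg)) (hh : ∀ t, h • A t = A (t + lh)) (n m : ℤ) :
    dist (A 0) ((g ^ n * h ^ m) • A 0) = |n * lg + m * lh| := by
  rw [mul_smul, zpow_smul_eq_of_forall_smul_eq hh, zpow_smul_eq_of_forall_smul_eq hg,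
    hA.dist_eq, Real.dist_eq, zero_add, zero_sub, abs_neg, add_comm]

end Translation

theorem abs_sub_floor_div_mul_le {a b : ℝ} (hb : 0 < b) : |a - ⌊a / b⌋ * b| ≤ b := by
  rw [abs_of_nonneg (Int.sub_floor_div_mul_nonneg a hb)]
  exact (Int.sub_floor_div_mul_lt a hb).le

theorem exists_zpow_eq_zpow_of_finite {G : Type*} [Group G] {g h : G} {S : Set G}
    (hS : S.Finite) (hgS : ∀ n : ℕ, ∃ m : ℤ, g ^ (n : ℤ) * h ^ m ∈ S) :
    ∃ n m : ℤ, n ≠ 0 ∧ g ^ n = h ^ m := by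
  choose m hm using hgS
  obtain ⟨n₁, n₂, hlt, heq⟩ := hS.exists_lt_map_eq_of_forall_mem hm
  refine ⟨n₂ - n₁, m n₁ - m n₂, by omega, ?_⟩
  calc g ^ ((n₂ : ℤ) - n₁)
      = (g ^ (n₁ : ℤ))⁻¹ * (g ^ (n₂ : ℤ) * h ^ m n₂) * (h ^ m n₂)⁻¹ := by group
    _ = (g ^ (n₁ : ℤ))⁻¹ * (g ^ (n₁ : ℤ) * h ^ m n₁) * (h ^ m n₂)⁻¹ := by rw [heq]
    _ = h ^ (m n₁ - m n₂) := by group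

theorem common_axis_commensurable_general
    {G X : Type*} [Group G] [MetricSpace X] [MulAction G X]
    (g h : G) (lg lh : ℝ) (hlg : 0 < lg) (hlh : 0 < lh)
    (A : ℝ → X) (hA : ∀ s t : ℝ, dist (A s) (A t) = |s - t|)
    (hgax : ∀ t : ℝ, g • A t = A (t + lg))
    (hhax : ∀ t : ℝ, h • A t = A (t + lh))
    (hproper : ∀ (x : X) (R : ℝ),
      {k : G | k ∈ Subgroup.closure {g, h} ∧ dist x (k • x) ≤ R}.Finite) :
    ∃ n m : ℤ, n ≠ 0 ∧ m ≠ 0 ∧ g ^ n = h ^ m := by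
  have hA_isom : Isometry A :=
    Isometry.of_dist_eq fun s t => (hA s t).trans (Real.dist_eq s t).symm
  have hg : g ∈ Subgroup.closure {g, h} := Subgroup.subset_closure (by simp)
  have hh : h ∈ Subgroup.closure {g, h} := Subgroup.subset_closure (by simp)
  obtain ⟨n, m, hn, hgh⟩ := exists_zpow_eq_zpow_of_finite (hproper (A 0) lh) fun n =>
    ⟨-⌊n * lg / lh⌋, mul_mem (zpow_mem hg _) (zpow_mem hh _), by
      rw [dist_zpow_mul_zpow_smul hA_isom hgax hhax, Int.cast_neg, neg_mul, ← sub_eq_add_neg,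
        Int.cast_natCast]
      exact abs_sub_floor_div_mul_le hlh⟩
  refine ⟨n, m, hn, ?_, hgh⟩
  rintro rfl
  exact zpow_ne_one_of_forall_smul_eq hA_isom.injective hgax hlg.ne' hn (by rwa [zpow_zero] at hgh)

/-- Let `g`, `h` be hyperbolic isometries of a CAT(0) space whose minsets
share a common axis (a geodesic line `A` along which both translate, by `lg, lh > 0`).
If the subgroup `⟨g, h⟩` acts (metrically) properly, then `gⁿ = hᵐ` for some nonzero
integers `n`, `m`; in particular `⟨g⟩ ∩ ⟨h⟩ ≠ {1}`. -/
theorem common_axis_commensurable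
    {G X : Type*} [Group G] [MetricSpace X] [MulAction G X]
    (isom : ∀ (g : G) (x y : X), dist (g • x) (g • y) = dist x y)
    (g h : G) (lg lh : ℝ) (hlg : 0 < lg) (hlh : 0 < lh)
    (A : ℝ → X) (hA : ∀ s t : ℝ, dist (A s) (A t) = |s - t|)
    (hgax : ∀ t : ℝ, g • A t = A (t + lg))
    (hhax : ∀ t : ℝ, h • A t = A (t + lh))
    (hproper : ∀ (x : X) (R : ℝ),
      {k : G | k ∈ Subgroup.closure {g, h} ∧ dist x (k • x) ≤ R}.Finite) :
    ∃ n m : ℤ, n ≠ 0 ∧ m ≠ 0 ∧ g ^ n = h ^ m :=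
  common_axis_commensurable_general g h lg lh hlg hlh A hA hgax hhax hproper
end
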